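/- arXiv:2002.02824 — 2 statements merged into one kernel-verified Lean document; each statement's English description precedes it below -/
import Mathlib

section
/- The vertex cover game on the 4-cycle C_4 admits no population monotonic allocation scheme. -/
/-- A finset of vertices `C` is a vertex cover of the edge-induced subgraph `G[S]`. -/
def IsVertexCoverOf {V : Type*} (G : SimpleGraph V) (C : Finset V) (S : Finset G.edgeSet) : Prop :=
  ∀ e ∈ S, ∃ v ∈ C, v ∈ (e : Sym2 V)

/-- The vertex cover number `τ(G[S])` of the edge-induced subgraph `G[S]`. -/
noncomputable def vcNum {V : Type*} (G : SimpleGraph V) (S : Finset G.edgeSet) : ℕ :=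
  sInf {n | ∃ C : Finset V, IsVertexCoverOf G C S ∧ C.card = n}

/-- The characteristic function of the vertex cover game on `G`: players are the
edges of `G` and `γ(S) = τ(G[S])`. -/
noncomputable def vcGame {V : Type*} (G : SimpleGraph V) (S : Finset G.edgeSet) : ℝ :=
  (vcNum G S : ℝ)

/-- A population monotonic allocation scheme (PMAS): efficiency on every nonempty
coalition, and monotonicity `a_{S,i} ≥ a_{T,i}` for `S ⊆ T`, `i ∈ S`. -/
def IsPMAS {α : Type*} (γ : Finset α → ℝ) (a : Finset α → α → ℝ) : Prop :=
  (∀ S : Finset α, S.Nonempty → ∑ i ∈ S, a S i = γ S) ∧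
  (∀ S T : Finset α, S ⊆ T → ∀ i ∈ S, a T i ≤ a S i)

abbrev Gc : SimpleGraph (Fin 4) := SimpleGraph.cycleGraph 4

def ed (u v : Fin 4) (h : Gc.Adj u v) : Gc.edgeSet := ⟨s(u,v), h⟩

def e01 : Gc.edgeSet := ed 0 1 (by decide)
def e12 : Gc.edgeSet := ed 1 2 (by decide)
def e23 : Gc.edgeSet := ed 2 3 (by decide)
def e30 : Gc.edgeSet := ed 3 0 (by decide)

lemma ne0112 : e01 ≠ e12 := fun h => absurd (congrArg Subtype.val h) (by decide)
lemma ne0123 : e01 ≠ e23 := fun h => absurd (congrArg Subtype.val h) (by decide)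
lemma ne1223 : e12 ≠ e23 := fun h => absurd (congrArg Subtype.val h) (by decide)
lemma ne1230 : e12 ≠ e30 := fun h => absurd (congrArg Subtype.val h) (by decide)
lemma ne2330 : e23 ≠ e30 := fun h => absurd (congrArg Subtype.val h) (by decide)

lemma vc_pair (eA eB : Gc.edgeSet) (v : Fin 4) (hA : v ∈ (eA : Sym2 (Fin 4)))
    (hB : v ∈ (eB : Sym2 (Fin 4))) : vcNum Gc {eA, eB} = 1 := by
  have hcov : IsVertexCoverOf Gc {v} {eA, eB} := by
    intro e he
    rcases Finset.mem_insert.mp he with h | h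
    · exact ⟨v, Finset.mem_singleton_self v, h ▸ hA⟩
    · exact ⟨v, Finset.mem_singleton_self v, (Finset.mem_singleton.mp h) ▸ hB⟩
  apply le_antisymm
  · exact Nat.sInf_le ⟨{v}, hcov, Finset.card_singleton v⟩
  · have hne : {n | ∃ C, IsVertexCoverOf Gc C {eA, eB} ∧ C.card = n}.Nonempty :=
      ⟨1, {v}, hcov, Finset.card_singleton v⟩
    refine le_csInf hne ?_
    rintro n ⟨C, hC, rfl⟩
    obtain ⟨w, hw, -⟩ := hC eA (Finset.mem_insert_self _ _)
    exact Finset.card_pos.mpr ⟨w, hw⟩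

lemma vc_triple (eA eB eC : Gc.edgeSet) (u v : Fin 4) (huv : u ≠ v)
    (hA : u ∈ (eA : Sym2 (Fin 4))) (hB : u ∈ (eB : Sym2 (Fin 4)) ∨ v ∈ (eB : Sym2 (Fin 4)))
    (hC : v ∈ (eC : Sym2 (Fin 4)))
    (hdisj : ∀ w : Fin 4, w ∈ (eA : Sym2 (Fin 4)) → w ∉ (eC : Sym2 (Fin 4))) :
    vcNum Gc {eA, eB, eC} = 2 := by
  have hcov : IsVertexCoverOf Gc {u, v} {eA, eB, eC} := by
    intro e he
    simp only [Finset.mem_insert, Finset.mem_singleton] at he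
    rcases he with rfl | rfl | rfl
    · exact ⟨u, Finset.mem_insert_self _ _, hA⟩
    · rcases hB with h | h
      · exact ⟨u, Finset.mem_insert_self _ _, h⟩
      · exact ⟨v, Finset.mem_insert_of_mem (Finset.mem_singleton_self v), h⟩
    · exact ⟨v, Finset.mem_insert_of_mem (Finset.mem_singleton_self v), hC⟩
  have hcard : ({u, v} : Finset (Fin 4)).card = 2 := Finset.card_pair huv
  apply le_antisymm
  · exact Nat.sInf_le ⟨{u, v}, hcov, hcard⟩
  · have hne : {n | ∃ C, IsVertexCoverOf Gc C {eA, eB, eC} ∧ C.card = n}.Nonempty :=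
      ⟨2, {u, v}, hcov, hcard⟩
    refine le_csInf hne ?_
    rintro n ⟨C, hCc, rfl⟩
    obtain ⟨w1, hw1, hw1e⟩ := hCc eA (Finset.mem_insert_self _ _)
    obtain ⟨w2, hw2, hw2e⟩ := hCc eC
      (Finset.mem_insert_of_mem (Finset.mem_insert_of_mem (Finset.mem_singleton_self _)))
    have hne : w1 ≠ w2 := fun h => hdisj w1 hw1e (h ▸ hw2e)
    exact Finset.one_lt_card.mpr ⟨w1, hw1, w2, hw2, hne⟩


/-- The vertex cover game on the 4-cycle `C₄` admits no PMAS. -/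
theorem no_pmas_C4 :
    ¬ ∃ a : Finset (SimpleGraph.cycleGraph 4).edgeSet → (SimpleGraph.cycleGraph 4).edgeSet → ℝ,
      IsPMAS (vcGame (SimpleGraph.cycleGraph 4)) a := by
  rintro ⟨a, eff, mono⟩
  have g12 : vcNum Gc {e01, e12} = 1 := vc_pair e01 e12 1 (by decide) (by decide)
  have g23 : vcNum Gc {e12, e23} = 1 := vc_pair e12 e23 2 (by decide) (by decide)
  have g34 : vcNum Gc {e23, e30} = 1 := vc_pair e23 e30 3 (by decide) (by decide)
  have t1 : vcNum Gc {e01, e12, e23} = 2 :=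
    vc_triple e01 e12 e23 1 2 (by decide) (by decide) (Or.inl (by decide)) (by decide)
      (by decide)
  have t2 : vcNum Gc {e12, e23, e30} = 2 :=
    vc_triple e12 e23 e30 2 3 (by decide) (by decide) (Or.inl (by decide)) (by decide)
      (by decide)
  -- sums
  have s12 := eff {e01, e12} ⟨e01, Finset.mem_insert_self _ _⟩
  have s23 := eff {e12, e23} ⟨e12, Finset.mem_insert_self _ _⟩
  have s34 := eff {e23, e30} ⟨e23, Finset.mem_insert_self _ _⟩
  have sT1 := eff {e01, e12, e23} ⟨e01, Finset.mem_insert_self _ _⟩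
  have sT2 := eff {e12, e23, e30} ⟨e12, Finset.mem_insert_self _ _⟩
  rw [Finset.sum_pair ne0112] at s12
  rw [Finset.sum_pair ne1223] at s23
  rw [Finset.sum_pair ne2330] at s34
  rw [Finset.sum_insert (by simp [ne0112, ne0123]), Finset.sum_pair ne1223] at sT1
  rw [Finset.sum_insert (by simp [ne1223, ne1230]), Finset.sum_pair ne2330] at sT2
  simp only [vcGame, g12, g23, g34, t1, t2, Nat.cast_one, Nat.cast_ofNat] at s12 s23 s34 sT1 sT2
  have sub1 : ({e01, e12} : Finset Gc.edgeSet) ⊆ {e01, e12, e23} := by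
    intro x hx; simp only [Finset.mem_insert, Finset.mem_singleton] at hx ⊢; tauto
  have sub2 : ({e12, e23} : Finset Gc.edgeSet) ⊆ {e01, e12, e23} := by
    intro x hx; simp only [Finset.mem_insert, Finset.mem_singleton] at hx ⊢; tauto
  have sub3 : ({e12, e23} : Finset Gc.edgeSet) ⊆ {e12, e23, e30} := by
    intro x hx; simp only [Finset.mem_insert, Finset.mem_singleton] at hx ⊢; tauto
  have sub4 : ({e23, e30} : Finset Gc.edgeSet) ⊆ {e12, e23, e30} := by
    intro x hx; simp only [Finset.mem_insert, Finset.mem_singleton] at hx ⊢; tauto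
  have m1 := mono _ _ sub1 e01 (Finset.mem_insert_self _ _)
  have m2 := mono _ _ sub1 e12 (by simp)
  have m3 := mono _ _ sub2 e23 (by simp)
  have m4 := mono _ _ sub3 e12 (Finset.mem_insert_self _ _)
  have m5 := mono _ _ sub4 e23 (Finset.mem_insert_self _ _)
  have m6 := mono _ _ sub4 e30 (by simp)
  linarith [s23]
end

section
/- Let Γ_G be the vertex cover game on a graph G and let a be a PMAS for Γ_G. Then for every nonempty coalition S ⊆ E(G), the restriction a_S = (a_{S,i})_{i∈S} is an optimal solution of the fractional matching LP: it satisfies a_{S,i} ≥ 0 for all i ∈ S, Σ_{i ∈ δ_S(v)} a_{S,i} ≤ 1 for every vertex v of G[S], and Σ_{i∈S} a_{S,i} equals the maximum of Σ x_i over all such feasible x (which equals τ(G[S]) since G[S] is bipartite). -/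
lemma vcNum_le_card {V : Type*} (G : SimpleGraph V) {S : Finset G.edgeSet} {C : Finset V}
    (hC : IsVertexCoverOf G C S) : vcNum G S ≤ C.card :=
  Nat.sInf_le ⟨C, hC, rfl⟩

lemma exists_opt_cover {V : Type*} [Fintype V] (G : SimpleGraph V) (S : Finset G.edgeSet) :
    ∃ C : Finset V, IsVertexCoverOf G C S ∧ C.card = vcNum G S := by
  have hne : {n | ∃ C : Finset V, IsVertexCoverOf G C S ∧ C.card = n}.Nonempty := by
    refine ⟨(Finset.univ : Finset V).card, Finset.univ, ?_, rfl⟩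
    intro e _
    exact ⟨(e : Sym2 V).out.1, Finset.mem_univ _, Sym2.out_fst_mem _⟩
  obtain ⟨C, hC, hcard⟩ := Nat.sInf_mem hne
  exact ⟨C, hC, hcard⟩

lemma vcNum_mono {V : Type*} [Fintype V] (G : SimpleGraph V) {S T : Finset G.edgeSet}
    (h : S ⊆ T) : vcNum G S ≤ vcNum G T := by
  obtain ⟨C, hC, hcard⟩ := exists_opt_cover G T
  exact hcard ▸ vcNum_le_card G (fun e he => hC e (h he))

/-- For a PMAS `a` of the vertex cover game on `G`, each restriction `a_S` is an
optimal solution of the fractional matching LP on `G[S]`: it is nonnegative, sums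
to at most `1` over the edges at each vertex, and its total value dominates that
of every feasible solution and equals `τ(G[S])`. -/
theorem pmas_restriction_dual_optimal {V : Type*} [Fintype V] [DecidableEq V]
    (G : SimpleGraph V) (a : Finset G.edgeSet → G.edgeSet → ℝ)
    (ha : IsPMAS (vcGame G) a) (S : Finset G.edgeSet) (hS : S.Nonempty) :
    (∀ i ∈ S, 0 ≤ a S i) ∧
    (∀ v : V, ∑ i ∈ S.filter (fun i : G.edgeSet => v ∈ (i : Sym2 V)), a S i ≤ 1) ∧
    (∑ i ∈ S, a S i = (vcNum G S : ℝ)) ∧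
    (∀ x : G.edgeSet → ℝ, (∀ i ∈ S, 0 ≤ x i) →
      (∀ v : V, ∑ i ∈ S.filter (fun i : G.edgeSet => v ∈ (i : Sym2 V)), x i ≤ 1) →
      ∑ i ∈ S, x i ≤ ∑ i ∈ S, a S i) := by
  have heff : ∑ i ∈ S, a S i = (vcNum G S : ℝ) := ha.1 S hS
  refine ⟨?_, ?_, heff, ?_⟩
  · -- nonnegativity
    intro i hi
    have hsplit : a S i + ∑ j ∈ S.erase i, a S j = ∑ j ∈ S, a S j :=
      Finset.add_sum_erase S _ hi
    by_cases hE : (S.erase i).Nonempty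
    · have hsum' : ∑ j ∈ S.erase i, a (S.erase i) j = (vcNum G (S.erase i) : ℝ) :=
        ha.1 (S.erase i) hE
      have hmono : ∑ j ∈ S.erase i, a S j ≤ ∑ j ∈ S.erase i, a (S.erase i) j :=
        Finset.sum_le_sum fun j hj => ha.2 _ S (Finset.erase_subset _ _) j hj
      have hτ : (vcNum G (S.erase i) : ℝ) ≤ (vcNum G S : ℝ) := by
        exact_mod_cast vcNum_mono G (Finset.erase_subset i S)
      linarith
    · have hempty : S.erase i = ∅ := Finset.not_nonempty_iff_eq_empty.mp hE
      have h0 : (0 : ℝ) ≤ (vcNum G S : ℝ) := Nat.cast_nonneg _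
      rw [hempty, Finset.sum_empty] at hsplit
      linarith
  · -- degree constraints
    intro v
    by_cases hTne : (S.filter (fun i : G.edgeSet => v ∈ (i : Sym2 V))).Nonempty
    · set T := S.filter (fun i : G.edgeSet => v ∈ (i : Sym2 V)) with hT
      have h1 : ∑ i ∈ T, a S i ≤ ∑ i ∈ T, a T i :=
        Finset.sum_le_sum fun i hi => ha.2 T S (Finset.filter_subset _ _) i hi
      have h2 : ∑ i ∈ T, a T i = (vcNum G T : ℝ) := ha.1 T hTne
      have h3 : vcNum G T ≤ 1 := by
        have hcov : IsVertexCoverOf G {v} T := by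
          intro e he
          exact ⟨v, Finset.mem_singleton_self v, (Finset.mem_filter.mp he).2⟩
        simpa using vcNum_le_card G hcov
      have h3' : (vcNum G T : ℝ) ≤ 1 := by exact_mod_cast h3
      linarith
    · rw [Finset.not_nonempty_iff_eq_empty.mp hTne, Finset.sum_empty]
      norm_num
  · -- optimality via weak duality
    intro x hx hxv
    rw [heff]
    obtain ⟨C, hC, hcard⟩ := exists_opt_cover G S
    calc ∑ i ∈ S, x i
        ≤ ∑ i ∈ S, ∑ v ∈ C.filter (fun v => v ∈ (i : Sym2 V)), x i := by
          apply Finset.sum_le_sum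
          intro i hi
          obtain ⟨w, hwC, hwi⟩ := hC i hi
          exact Finset.single_le_sum (f := fun _ => x i) (fun _ _ => hx i hi)
            (Finset.mem_filter.mpr ⟨hwC, hwi⟩)
      _ = ∑ v ∈ C, ∑ i ∈ S.filter (fun i : G.edgeSet => v ∈ (i : Sym2 V)), x i := by
          simp only [Finset.sum_filter]
          exact Finset.sum_comm
      _ ≤ ∑ v ∈ C, (1 : ℝ) := Finset.sum_le_sum fun v _ => hxv v
      _ = (C.card : ℝ) := by simp
      _ = (vcNum G S : ℝ) := by rw [hcard]
end
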